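/- Let I be a finite subset of Fin n. Then in the Clifford algebra Cl = ℝ_{p,q}, the sum of e_J · e_I · e^J over ALL subsets J of Fin n equals 2^n · e_I if I = ∅, equals 2^n · e_I if I is all of Fin n and n is odd, and equals 0 in all other cases (i.e. when I is nonempty and proper, or when I = Fin n with n even). -/

import Mathlib

noncomputable section

/-- The weights of the quadratic form of signature `(p, q)`: `1` for the first `p`
coordinates and `-1` for the remaining ones. -/
def cliffordWeight (p : ℕ) {n : ℕ} (i : Fin n) : ℝ := if (i : ℕ) < p then 1 else -1

/-- The quadratic form of signature `(p, q)` on `Fin (p + q) → ℝ`. -/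
def cliffordQ (p q : ℕ) : QuadraticForm ℝ (Fin (p + q) → ℝ) :=
  QuadraticMap.weightedSumSquares ℝ (cliffordWeight p)

/-- The generator `e i` of the Clifford algebra `ℝ_{p,q}`. -/
def cliffordE (p q : ℕ) (i : Fin (p + q)) : CliffordAlgebra (cliffordQ p q) :=
  CliffordAlgebra.ι (cliffordQ p q) (Pi.single i 1)

/-- `e_J`: the product of the generators `e j` for `j ∈ J`, in increasing order. -/
def eLower (p q : ℕ) (J : Finset (Fin (p + q))) : CliffordAlgebra (cliffordQ p q) :=
  ((J.sort (· ≤ ·)).map (cliffordE p q)).prod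

/-- `e^J`: the product of the elements `w j • e j` for `j ∈ J`, in decreasing order. -/
def eUpper (p q : ℕ) (J : Finset (Fin (p + q))) : CliffordAlgebra (cliffordQ p q) :=
  ((J.sort (· ≤ ·)).reverse.map (fun j => cliffordWeight p j • cliffordE p q j)).prod

/-! Conjugation by `e j`, whose inverse is `w j • e j`, multiplies `e_I` by the sign
`(-1) ^ #(I.erase j)`, because `e j` anticommutes with every other generator. Hence
`e_J * e_I * e^J` is `e_I` times the product of these signs over `J`, and the sum over all `J`
factors as `∏ j, (1 + (-1) ^ #(I.erase j)) • e_I`. This is `2 ^ n • e_I` when all the signs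
are `+1` and `0` otherwise; all of them are `+1` exactly when `I = ∅`, or `I = univ` with `n`
odd. -/

open Finset

namespace QuadraticMap

variable {ι R : Type*} [Fintype ι] [DecidableEq ι] [CommSemiring R]

theorem weightedSumSquares_single (w : ι → R) (i : ι) (a : R) :
    weightedSumSquares R w (Pi.single i a) = w i * (a * a) := by
  simp [Pi.single_apply]

theorem isOrtho_weightedSumSquares_single (w : ι → R) {i j : ι} (h : i ≠ j) (a b : R) :
    (weightedSumSquares R w).IsOrtho (Pi.single i a) (Pi.single j b) := by
  rw [isOrtho_def]
  simp only [weightedSumSquares_apply, ← sum_add_distrib]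
  refine sum_congr rfl fun k _ => ?_
  rcases eq_or_ne k i with rfl | hki
  · simp [h]
  · simp [hki]

end QuadraticMap

section Ring

variable {ι A : Type*} [Ring A]

theorem mul_list_prod_map_of_commute_or_anticommute {x : A} {f : ι → A} (P : ι → Prop)
    [DecidablePred P] (hcomm : ∀ i, ¬P i → x * f i = f i * x)
    (hanti : ∀ i, P i → x * f i = -(f i * x)) (l : List ι) :
    x * (l.map f).prod = (-1 : ℤ) ^ l.countP (P ·) • ((l.map f).prod * x) := by
  induction l with
  | nil => simp
  | cons i l ih =>
    rw [List.map_cons, List.prod_cons, ← mul_assoc, List.countP_cons]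
    by_cases hi : P i
    · rw [hanti i hi, neg_mul, mul_assoc, ih, mul_smul_comm, ← mul_assoc]
      simp [hi, pow_succ]
    · rw [hcomm i hi, mul_assoc, ih, mul_smul_comm, ← mul_assoc]
      simp [hi]

theorem list_prod_map_mul_mul_prod_map_reverse {a b : ι → A} {s : ι → ℤ} {x : A}
    (h : ∀ j, a j * x * b j = s j • x) (l : List ι) :
    (l.map a).prod * x * (l.reverse.map b).prod = (l.map s).prod • x := by
  induction l with
  | nil => simp
  | cons j l ih =>
    calc ((j :: l).map a).prod * x * ((j :: l).reverse.map b).prod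
        = a j * ((l.map a).prod * x * (l.reverse.map b).prod) * b j := by
          simp [mul_assoc]
      _ = ((j :: l).map s).prod • x := by
          rw [ih, mul_smul_comm, smul_mul_assoc, h, smul_smul]
          simp [mul_comm]

end Ring

theorem Finset.countP_sort {α : Type*} [LinearOrder α] (s : Finset α) (P : α → Prop)
    [DecidablePred P] : (s.sort (· ≤ ·)).countP (P ·) = #(s.filter P) := by
  rw [← Multiset.coe_countP, Finset.sort_eq, Multiset.countP_eq_card_filter]
  rfl

theorem Finset.prod_map_sort {α M : Type*} [LinearOrder α] [CommMonoid M] (s : Finset α)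
    (f : α → M) : ((s.sort (· ≤ ·)).map f).prod = ∏ i ∈ s, f i := by
  rw [← Multiset.prod_coe, ← Multiset.map_coe, Finset.sort_eq]
  rfl

theorem Finset.prod_neg_one_pow_add_one {α : Type*} [Fintype α] (k : α → ℕ) :
    ∏ j, ((-1 : ℤ) ^ k j + 1) = if ∀ j, Even (k j) then 2 ^ Fintype.card α else 0 := by
  split_ifs with h
  · simp [(h _).neg_one_pow]
  · obtain ⟨j, hj⟩ := not_forall.mp h
    exact prod_eq_zero (mem_univ j) (by simp [(Nat.not_even_iff_odd.mp hj).neg_one_pow])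

theorem Finset.forall_even_card_erase_iff {α : Type*} [Fintype α] [DecidableEq α]
    (I : Finset α) :
    (∀ j, Even #(I.erase j)) ↔ I = ∅ ∨ (I = univ ∧ Odd (Fintype.card α)) := by
  constructor
  · intro h
    rcases I.eq_empty_or_nonempty with rfl | ⟨i, hi⟩
    · exact .inl rfl
    have hodd : Odd #I := by
      rw [← card_erase_add_one hi]
      exact (h i).add_one
    have hI : I = univ := eq_univ_iff_forall.mpr fun j => by_contra fun hj =>
      Nat.not_even_iff_odd.mpr hodd (erase_eq_of_notMem hj ▸ h j)
    exact .inr ⟨hI, by rwa [hI, card_univ] at hodd⟩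
  · rintro (rfl | ⟨rfl, hodd⟩) j
    · simp
    · rw [card_erase_of_mem (mem_univ j), card_univ]
      exact Nat.Odd.sub_odd hodd odd_one

section Clifford

variable (p q : ℕ)

theorem cliffordWeight_mul_self {n : ℕ} (i : Fin n) :
    cliffordWeight p i * cliffordWeight p i = 1 := by
  unfold cliffordWeight
  split_ifs <;> norm_num

theorem cliffordE_mul_cliffordE_of_ne {i j : Fin (p + q)} (h : i ≠ j) :
    cliffordE p q i * cliffordE p q j = -(cliffordE p q j * cliffordE p q i) :=
  CliffordAlgebra.ι_mul_ι_comm_of_isOrtho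
    (QuadraticMap.isOrtho_weightedSumSquares_single _ h _ _)

theorem cliffordE_mul_smul_cliffordE (j : Fin (p + q)) :
    cliffordE p q j * (cliffordWeight p j • cliffordE p q j) = 1 := by
  rw [mul_smul_comm, cliffordE, CliffordAlgebra.ι_sq_scalar, cliffordQ,
    QuadraticMap.weightedSumSquares_single, Algebra.algebraMap_eq_smul_one, smul_smul]
  simp [cliffordWeight_mul_self]

theorem cliffordE_mul_eLower (j : Fin (p + q)) (I : Finset (Fin (p + q))) :
    cliffordE p q j * eLower p q I =
      (-1 : ℤ) ^ #(I.erase j) • (eLower p q I * cliffordE p q j) := by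
  rw [eLower, mul_list_prod_map_of_commute_or_anticommute (· ≠ j)
    (fun i hi => by rw [not_ne_iff.mp hi]) (fun i hi => cliffordE_mul_cliffordE_of_ne p q hi.symm),
    countP_sort, filter_ne']

theorem cliffordE_mul_eLower_mul_smul_cliffordE (j : Fin (p + q)) (I : Finset (Fin (p + q))) :
    cliffordE p q j * eLower p q I * (cliffordWeight p j • cliffordE p q j) =
      (-1 : ℤ) ^ #(I.erase j) • eLower p q I := by
  rw [cliffordE_mul_eLower, smul_mul_assoc, mul_assoc, cliffordE_mul_smul_cliffordE, mul_one]

theorem eLower_mul_mul_eUpper (I J : Finset (Fin (p + q))) :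
    eLower p q J * eLower p q I * eUpper p q J =
      (∏ j ∈ J, (-1 : ℤ) ^ #(I.erase j)) • eLower p q I := by
  rw [eLower, eUpper, list_prod_map_mul_mul_prod_map_reverse
    (cliffordE_mul_eLower_mul_smul_cliffordE p q · I), prod_map_sort]

end Clifford

theorem sum_eLower_mul_eUpper (p q : ℕ) (I : Finset (Fin (p + q))) :
    ∑ J : Finset (Fin (p + q)), eLower p q J * eLower p q I * eUpper p q J =
      if I = ∅ ∨ (I = Finset.univ ∧ Odd (p + q)) then
        (2 ^ (p + q) : ℤ) • eLower p q I
      else 0 := by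
  simp_rw [eLower_mul_mul_eUpper, ← sum_smul, ← powerset_univ, ← prod_add_one,
    prod_neg_one_pow_add_one, forall_even_card_erase_iff, Fintype.card_fin]
  split_ifs <;> simp
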